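/- arXiv:0812.3355 — 2 statements merged into one kernel-verified Lean document; each statement's English description precedes it below -/
import Mathlib

section
/- Let k be an uncountable field and let X be an integral scheme of finite type over k. Then X cannot be written as a union of countably many proper closed subsets: for every countable family (Z_i)_{i ∈ ℕ} of closed subsets of X with Z_i ≠ X for all i, one has ⋃_i Z_i ≠ X. -/
open AlgebraicGeometry CategoryTheory CategoryTheory.Limits TopologicalSpace

universe u

namespace ThcrDM

variable {X : Scheme.{u}}

/-- The `n`-th iterate (`n : ℤ`) of an automorphism of a scheme, on points. -/
noncomputable def iter (σ : X ≅ X) : ℤ → X → X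
  | Int.ofNat n => (fun x => σ.hom.base x)^[n]
  | Int.negSucc n => (fun x => σ.inv.base x)^[n + 1]

/-- The σ-orbit `{σ^n(x) : n ∈ ℤ}` of a point `x`. -/
noncomputable def orbit (σ : X ≅ X) (x : X) : Set X :=
  Set.range fun n : ℤ => iter σ n x

/-- A subset `Z` is σ-invariant if `σ(Z) = Z`. -/
def SigmaInv (σ : X ≅ X) (Z : Set X) : Prop :=
  σ.hom.base '' Z = Z

/-- A σ-invariant closed subset is σ-irreducible if it admits no decomposition into two
σ-invariant closed subsets both properly contained in it. -/
def SigmaIrred (σ : X ≅ X) (Z : Set X) : Prop :=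
  IsClosed Z ∧ SigmaInv σ Z ∧
    ∀ Z₁ Z₂ : Set X, IsClosed Z₁ → IsClosed Z₂ → SigmaInv σ Z₁ → SigmaInv σ Z₂ →
      Z = Z₁ ∪ Z₂ → ¬(Z₁ ⊂ Z ∧ Z₂ ⊂ Z)

/-- `W` is a maximal σ-irreducible closed subset of `Z`, i.e. a maximal element, under
inclusion, of the set of proper σ-irreducible closed subsets of `Z`. -/
def MaxSigmaIrredIn (σ : X ≅ X) (Z W : Set X) : Prop :=
  SigmaIrred σ W ∧ W ⊂ Z ∧ ∀ W' : Set X, SigmaIrred σ W' → W' ⊂ Z → W ⊆ W' → W' = W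

/-- `(X, σ)` has good dense orbits if the set of points with dense σ-orbit is open. -/
def GoodDenseOrbits (σ : X ≅ X) : Prop :=
  IsOpen { x : X | Dense (orbit σ x) }

/-- `(X, σ)` is ordinary if for every σ-irreducible closed subset `Z`, the set of points of `Z`
whose σ-orbit is dense in `Z` is open in `Z` (in the subspace topology). -/
def Ordinary (σ : X ≅ X) : Prop :=
  ∀ Z : Set X, SigmaIrred σ Z →
    ∃ U : Set X, IsOpen U ∧ { z | z ∈ Z ∧ Z ⊆ closure (orbit σ z) } = U ∩ Z

/-- `(X, σ)` is countable-avoiding if every σ-irreducible closed subset has either finitely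
many or uncountably many maximal σ-irreducible closed subsets. -/
def CountableAvoiding (σ : X ≅ X) : Prop :=
  ∀ Z : Set X, SigmaIrred σ Z →
    { W : Set X | MaxSigmaIrredIn σ Z W }.Finite ∨
      ¬ { W : Set X | MaxSigmaIrredIn σ Z W }.Countable

/-- A subset `Z` has codimension one if every irreducible component of `Z` (i.e. every maximal
irreducible subset of `Z`) has coheight 1 in the poset of irreducible closed subsets of `X`. -/
def CodimOne (Z : Set X) : Prop :=
  ∀ T : IrreducibleCloseds X,
    Maximal (fun s : Set X => s ⊆ Z ∧ IsIrreducible s) ↑T → Order.coheight T = 1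

/-- Powers of an automorphism. -/
noncomputable def isoPow (σ : X ≅ X) : ℕ → (X ≅ X)
  | 0 => Iso.refl X
  | n + 1 => isoPow σ n ≪≫ σ

/-- The automorphism of the function field induced by an automorphism of an irreducible
scheme. -/
noncomputable def functionFieldAut [IrreducibleSpace X] (σ : X ≅ X) :
    X.functionField ⟶ X.functionField :=
  eqToHom (congrArg X.presheaf.stalk (genericPoint_eq_of_isOpenImmersion σ.hom).symm) ≫
    σ.hom.stalkMap (genericPoint X)

/-- The canonical map from the base ring into the function field of an irreducible
scheme over it. -/
noncomputable def constMap [IrreducibleSpace X] {k : CommRingCat.{u}} (p : X ⟶ Spec k) :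
    k ⟶ X.functionField :=
  haveI : Nonempty (⊤ : X.Opens) := ⟨⟨Classical.arbitrary X, trivial⟩⟩
  (Scheme.ΓSpecIso k).inv ≫ p.appTop ≫ X.germToFunctionField ⊤

/-- An integral scheme of finite type over an uncountable field is not the
union of countably many proper closed subsets. -/
theorem statement0 (k : Type u) [Field k] [Uncountable k]
    (X : Scheme.{u}) (p : X ⟶ Spec (CommRingCat.of k))
    [IsIntegral X] [LocallyOfFiniteType p] [QuasiCompact p]
    (Z : ℕ → Set X) (hc : ∀ i, IsClosed (Z i)) (hp : ∀ i, Z i ≠ Set.univ) :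
    (⋃ i, Z i) ≠ Set.univ := by
  intro H
  have hgen : closure {genericPoint X} = Set.univ := genericPoint_spec X
  obtain ⟨i, hi⟩ := Set.mem_iUnion.mp (H ▸ Set.mem_univ (genericPoint X))
  apply hp i
  apply Set.eq_univ_of_univ_subset
  rw [← hgen]
  exact closure_minimal (Set.singleton_subset_iff.mpr hi) (hc i)

end ThcrDM
end

section
/- Let F be an algebraically closed field, let Y be an integral scheme of finite type over F, and let E/F be a field extension. Then the base extension X = Y ×_{Spec F} Spec E is an integral scheme. -/
open AlgebraicGeometry CategoryTheory CategoryTheory.Limits TopologicalSpace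

universe u

/-!
Let `x, y` be nonzero elements of `A ⊗[F] B`, where `A, B` are domains over the algebraically
closed field `F`. Their coordinates in an `F`-basis of `B` lie in a finitely generated subalgebra
of `A`, so we may assume `A` finitely generated. Pick nonzero coordinates `a` of `x` and `c` of
`y`; by the Nullstellensatz some `F`-point `φ : A → F` has `φ (a * c) ≠ 0`, and specialising
along `φ` sends `x` and `y` to nonzero elements of the domain `B`, so `x * y ≠ 0`.

Hence `Spec E → Spec F` is geometrically integral; it is also flat, and universally open as its
target is a point. So its base change `X → Y` is geometrically integral, flat and open, and over
the irreducible reduced `Y` this makes `X` irreducible and reduced.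
-/

open TensorProduct

namespace IsAlgClosed

theorem exists_algHom_apply_ne_zero (F : Type*) {A : Type*} [Field F] [IsAlgClosed F]
    [CommRing A] [Algebra F A] [Algebra.FiniteType F A] [IsReduced A] {a : A} (ha : a ≠ 0) :
    ∃ φ : A →ₐ[F] F, φ a ≠ 0 := by
  have : IsJacobsonRing A := isJacobsonRing_of_finiteType (A := F)
  have ha' : a ∉ (⊥ : Ideal A).jacobson := by
    rwa [IsJacobsonRing.out' _ Ideal.isRadical_bot, Ideal.mem_bot]
  obtain ⟨m, ⟨-, hm⟩, ham⟩ : ∃ m : Ideal A, (⊥ ≤ m ∧ m.IsMaximal) ∧ a ∉ m := by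
    simpa [Ideal.jacobson, Ideal.mem_sInf] using ha'
  let := Ideal.Quotient.field m
  have : Algebra.FiniteType F (A ⧸ m) :=
    .of_surjective (Ideal.Quotient.mkₐ F m) (Ideal.Quotient.mkₐ_surjective F m)
  have : Module.Finite F (A ⧸ m) := finite_of_finite_type_of_isJacobsonRing F _
  refine ⟨(lift : A ⧸ m →ₐ[F] F).comp (Ideal.Quotient.mkₐ F m), fun h => ham ?_⟩
  rw [AlgHom.comp_apply, map_eq_zero] at h
  exact Ideal.Quotient.eq_zero_iff_mem.mp h

end IsAlgClosed

theorem Module.Basis.repr_lift_comp_ofId {R A B ι : Type*} [CommSemiring R] [CommSemiring A]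
    [CommSemiring B] [Algebra R A] [Algebra R B] (b : Basis ι R B) (φ : A →ₐ[R] R)
    (x : A ⊗[R] B) (i : ι) :
    b.repr (Algebra.TensorProduct.lift ((Algebra.ofId R B).comp φ) (AlgHom.id R B)
      (fun _ _ => .all _ _) x) i =
      φ ((b.baseChange A).repr x i) := by
  induction x using TensorProduct.induction_on with
  | zero => simp
  | tmul a v => simpa [Algebra.ofId_apply, ← Algebra.smul_def] using mul_comm (φ a) _
  | add x y hx hy => simp [hx, hy]

namespace Algebra.TensorProduct

theorem exists_fg_subset_range_rTensor {R A M : Type*} [CommSemiring R] [Semiring A]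
    [Algebra R A] [AddCommMonoid M] [Module R M] (s : Set (A ⊗[R] M)) (hs : s.Finite) :
    ∃ A₀ : Subalgebra R A, A₀.FG ∧ s ⊆ LinearMap.range (A₀.val.toLinearMap.rTensor M) := by
  obtain ⟨N, hN, hsN⟩ := TensorProduct.exists_finite_submodule_left_of_setFinite s hs
  obtain ⟨t, rfl⟩ := Module.Finite.iff_fg.mp hN
  refine ⟨Algebra.adjoin R t, Subalgebra.fg_adjoin_finset t, ?_⟩
  rw [← Submodule.subtype_comp_inclusion _ _ (Algebra.span_le_adjoin R (t : Set A)),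
    LinearMap.rTensor_comp] at hsN
  exact hsN.trans (LinearMap.range_comp_le_range _ _)

theorem noZeroDivisors_of_forall_fg {R A B : Type*} [CommRing R] [CommRing A] [CommRing B]
    [Algebra R A] [Algebra R B] [Module.Flat R B]
    (h : ∀ A₀ : Subalgebra R A, A₀.FG → NoZeroDivisors (A₀ ⊗[R] B)) :
    NoZeroDivisors (A ⊗[R] B) := by
  refine ⟨fun {x y} hxy => ?_⟩
  obtain ⟨A₀, hA₀, hxy₀⟩ := exists_fg_subset_range_rTensor {x, y} (by simp)
  obtain ⟨⟨x₀, rfl⟩, y₀, rfl⟩ := Set.pair_subset_iff.mp hxy₀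
  let j : A₀ ⊗[R] B →ₐ[R] A ⊗[R] B := rTensor B A₀.val
  have hj : Function.Injective j :=
    Module.Flat.rTensor_preserves_injective_linearMap A₀.val.toLinearMap Subtype.val_injective
  have := h A₀ hA₀
  change j x₀ * j y₀ = 0 at hxy
  change j x₀ = 0 ∨ j y₀ = 0
  rw [← map_mul, ← map_zero j, hj.eq_iff, mul_eq_zero] at hxy
  exact hxy.imp (by rintro rfl; simp) (by rintro rfl; simp)

variable {F A B : Type*} [Field F] [IsAlgClosed F] [CommRing A] [CommRing B] [Algebra F A]
  [Algebra F B] [IsDomain A]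

theorem noZeroDivisors_of_finiteType [Algebra.FiniteType F A] [NoZeroDivisors B] :
    NoZeroDivisors (A ⊗[F] B) := by
  let b := Module.Basis.ofVectorSpace F B
  let c := (b.baseChange A).repr
  have exists_coord_ne_zero (x : A ⊗[F] B) (hx : x ≠ 0) : ∃ i, c x i ≠ 0 := by
    by_contra! h
    exact hx (c.injective (by ext i; simp [h]))
  refine ⟨fun {x y} hxy => or_iff_not_and_not.mpr fun ⟨hx, hy⟩ => ?_⟩
  obtain ⟨i, hi⟩ := exists_coord_ne_zero x hx
  obtain ⟨j, hj⟩ := exists_coord_ne_zero y hy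
  obtain ⟨φ, hφ⟩ := IsAlgClosed.exists_algHom_apply_ne_zero F (mul_ne_zero hi hj)
  rw [map_mul] at hφ
  let ψ := lift ((Algebra.ofId F B).comp φ) (AlgHom.id F B) (fun _ _ => .all _ _)
  have hψ (z : A ⊗[F] B) (k) (hk : φ (c z k) ≠ 0) : ψ z ≠ 0 := fun hz => by
    apply hk
    rw [← b.repr_lift_comp_ofId, hz, map_zero, Finsupp.zero_apply]
  exact mul_ne_zero (hψ x i (left_ne_zero_of_mul hφ)) (hψ y j (right_ne_zero_of_mul hφ))
    (by rw [← map_mul, hxy, map_zero])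

theorem isDomain_of_isAlgClosed [IsDomain B] : IsDomain (A ⊗[F] B) := by
  have : NoZeroDivisors (A ⊗[F] B) := noZeroDivisors_of_forall_fg fun A₀ hA₀ => by
    have := A₀.fg_iff_finiteType.mp hA₀
    exact noZeroDivisors_of_finiteType
  exact NoZeroDivisors.to_isDomain _

end Algebra.TensorProduct

namespace AlgebraicGeometry

theorem GeometricallyIntegral.isIntegral_of_flat_of_universallyOpen {X Y : Scheme.{u}} (f : X ⟶ Y)
    [GeometricallyIntegral f] [Flat f] [UniversallyOpen f] [IsIntegral Y] : IsIntegral X := by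
  have : Finite (irreducibleComponents Y) := by
    rw [irreducibleComponents_eq_singleton]
    infer_instance
  rw [isIntegral_iff_irreducibleSpace_and_isReduced]
  exact ⟨GeometricallyIrreducible.irreducibleSpace f f.isOpenMap,
    GeometricallyReduced.isReduced_of_flat_of_finite_irreducibleComponents f⟩

theorem geometricallyIntegral_Spec_map_algebraMap (F R : Type u) [Field F] [IsAlgClosed F]
    [CommRing R] [IsDomain R] [Algebra F R] :
    GeometricallyIntegral (Spec.map (CommRingCat.ofHom (algebraMap F R))) := by
  rw [geometricallyIntegral_iff, geometrically_iff_of_commRing]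
  intro K _ _ Z fst snd h
  have : IsDomain (R ⊗[F] K) := Algebra.TensorProduct.isDomain_of_isAlgClosed
  have e : Z ≅ Spec (.of (R ⊗[F] K)) := h.isoIsPullback _ _
    (isPullback_SpecMap_of_isPushout _ _ _ _ (CommRingCat.isPushout_tensorProduct F R K))
  have : Nonempty Z := ⟨e.inv.base (Nonempty.some inferInstance)⟩
  exact isIntegral_of_isOpenImmersion e.hom

end AlgebraicGeometry

namespace ThcrDM

theorem statement3_general (F : Type u) [Field F] [IsAlgClosed F]
    (E : Type u) [Field E] [Algebra F E]
    (Y : Scheme.{u}) (q : Y ⟶ Spec (CommRingCat.of F))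
    [IsIntegral Y]
    (X : Scheme.{u}) (π : X ⟶ Y) (s : X ⟶ Spec (CommRingCat.of E))
    (hpb : IsPullback π s q (Spec.map (CommRingCat.ofHom (algebraMap F E)))) :
    IsIntegral X := by
  have := geometricallyIntegral_Spec_map_algebraMap F E
  have : GeometricallyIntegral π := MorphismProperty.of_isPullback hpb.flip ‹_›
  have : Flat π := MorphismProperty.of_isPullback hpb.flip inferInstance
  have : UniversallyOpen π := MorphismProperty.of_isPullback hpb.flip inferInstance
  exact GeometricallyIntegral.isIntegral_of_flat_of_universallyOpen π

/-- Lemma 5.2 of the paper. The base extension `X = Y ×_{Spec F} Spec E` of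
an integral scheme `Y` of finite type over an algebraically closed field `F` along a field
extension `E/F` is again integral. -/
theorem statement3 (F : Type u) [Field F] [IsAlgClosed F]
    (E : Type u) [Field E] [Algebra F E]
    (Y : Scheme.{u}) (q : Y ⟶ Spec (CommRingCat.of F))
    [IsIntegral Y] [LocallyOfFiniteType q] [QuasiCompact q]
    (X : Scheme.{u}) (π : X ⟶ Y) (s : X ⟶ Spec (CommRingCat.of E))
    (hpb : IsPullback π s q (Spec.map (CommRingCat.ofHom (algebraMap F E)))) :
    IsIntegral X :=
  statement3_general F E Y q X π s hpb

end ThcrDM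
end
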